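/- arXiv:1807.01540 — 3 statements merged into one kernel-verified Lean document; each statement's English description precedes it below -/
import Mathlib

section
/- Let (X,d) be a metric space and ε ∈ [0,∞). In the category of chain complexes of abelian groups, consider the parallel pair of chain maps f, g : ⨁_{l : 0 ≤ l ≤ ε} CN(X)(l) ⇉ CN(X)(ε), where on the summand indexed by l the map f is the chain map induced by the inclusion N(X)(l) ⊆ N(X)(ε), and g is the identity chain map on the summand l = ε and the zero map on every summand with l < ε. Then the coequalizer of (f,g) is isomorphic to the quotient chain complex CN(X)(ε)/D(ε), whose degree-n part is a free abelian group with basis the (n+1)-tuples (x_0,…,x_n) of points of X of length exactly ε. -/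
open CategoryTheory CategoryTheory.Limits

noncomputable section

namespace Mag

variable (X : Type) [MetricSpace X]

/-- The length of a tuple of points `(x 0, …, x n)` of a metric space:
`∑ i, dist (x i) (x (i+1))`. -/
def len {n : ℕ} (f : Fin (n + 1) → X) : ℝ :=
  ∑ i : Fin n, dist (f i.castSucc) (f i.succ)

lemma len_nonneg {n : ℕ} (f : Fin (n + 1) → X) : 0 ≤ len X f :=
  Finset.sum_nonneg fun _ _ => dist_nonneg

/-- Extension of a tuple to a function on `ℕ`, constant past the end. -/
def ext' {n : ℕ} (f : Fin (n + 1) → X) : ℕ → X :=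
  fun m => f ⟨min m n, Nat.lt_succ_of_le (min_le_right m n)⟩

lemma len_eq_sum_range {n : ℕ} (f : Fin (n + 1) → X) :
    len X f = ∑ m ∈ Finset.range n, dist (ext' X f m) (ext' X f (m + 1)) := by
  rw [len, ← Fin.sum_univ_eq_sum_range]
  apply Finset.sum_congr rfl
  intro i _
  congr 1
  · congr 1
    apply Fin.ext
    simp [ext', min_eq_left i.isLt.le]
  · congr 1
    apply Fin.ext
    simp [ext', min_eq_left (Nat.succ_le_of_lt i.isLt)]

private lemma chunk_sum (u : ℕ → ℝ) (G : ℕ → ℕ) (hG : Monotone G) (M : ℕ) :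
    ∑ j ∈ Finset.range M, ∑ i ∈ Finset.Ico (G j) (G (j + 1)), u i
      = ∑ i ∈ Finset.Ico (G 0) (G M), u i := by
  induction M with
  | zero => simp
  | succ M ih =>
    rw [Finset.sum_range_succ, ih]
    exact Finset.sum_Ico_consecutive u (hG (Nat.zero_le M)) (hG (Nat.le_succ M))

/-- Precomposition with a monotone map does not increase the length of a tuple. -/
lemma len_comp_le {m n : ℕ} (f : Fin (n + 1) → X) (g : Fin (m + 1) →o Fin (n + 1)) :
    len X (f ∘ g) ≤ len X f := by
  set F : ℕ → X := ext' X f with hF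
  set G : ℕ → ℕ :=
    fun j => ((g ⟨min j m, Nat.lt_succ_of_le (min_le_right j m)⟩ : Fin (n + 1)) : ℕ) with hG
  have hGle : ∀ j, G j ≤ n := fun j => Nat.lt_succ_iff.mp (g _).isLt
  have hGmono : Monotone G := by
    intro a b hab
    exact g.monotone (Fin.mk_le_mk.mpr (min_le_min hab le_rfl))
  have key : ∀ j, ext' X (f ∘ g) j = F (G j) := by
    intro j
    show (f ∘ g) _ = f _
    simp only [Function.comp_apply, hF, ext']
    congr 1
    apply Fin.ext
    simp [min_eq_left (hGle j)]
    rfl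
  calc len X (f ∘ g)
      = ∑ j ∈ Finset.range m, dist (F (G j)) (F (G (j + 1))) := by
        rw [len_eq_sum_range]
        exact Finset.sum_congr rfl fun j _ => by rw [key, key]
    _ ≤ ∑ j ∈ Finset.range m, ∑ i ∈ Finset.Ico (G j) (G (j + 1)), dist (F i) (F (i + 1)) := by
        apply Finset.sum_le_sum
        intro j _
        exact dist_le_Ico_sum_dist F (hGmono (Nat.le_succ j))
    _ = ∑ i ∈ Finset.Ico (G 0) (G m), dist (F i) (F (i + 1)) := chunk_sum _ G hGmono m
    _ ≤ ∑ i ∈ Finset.range n, dist (F i) (F (i + 1)) := by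
        apply Finset.sum_le_sum_of_subset_of_nonneg
        · intro i hi
          rw [Finset.mem_range]
          exact lt_of_lt_of_le (Finset.mem_Ico.mp hi).2 (hGle m)
        · intro i _ _
          exact dist_nonneg
    _ = len X f := (len_eq_sum_range X f).symm

/-- The enriched nerve of a metric space at scale `ε`: the simplicial set whose
`n`-simplices are the `(n+1)`-tuples of points of length at most `ε`. -/
def N (ε : ℝ) : SSet where
  obj Δ := { f : Fin (Δ.unop.len + 1) → X // len X f ≤ ε }
  map θ := TypeCat.ofHom fun f => ⟨f.1 ∘ θ.unop.toOrderHom, (len_comp_le X f.1 θ.unop.toOrderHom).trans f.2⟩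
  map_id _ := rfl
  map_comp _ _ := rfl

/-- The Vietoris–Rips simplicial set of a metric space at scale `ε`: the simplicial set whose
`n`-simplices are the `(n+1)`-tuples of points with pairwise distances at most `ε`. -/
def V (ε : ℝ) : SSet where
  obj Δ := { f : Fin (Δ.unop.len + 1) → X // ∀ i j, dist (f i) (f j) ≤ ε }
  map θ := TypeCat.ofHom fun f => ⟨f.1 ∘ θ.unop.toOrderHom, fun _ _ => f.2 _ _⟩
  map_id _ := rfl
  map_comp _ _ := rfl

/-- The "strict" enriched nerve: tuples of length strictly less than `ε`. -/
def N' (ε : ℝ) : SSet where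
  obj Δ := { f : Fin (Δ.unop.len + 1) → X // len X f < ε }
  map θ := TypeCat.ofHom fun f => ⟨f.1 ∘ θ.unop.toOrderHom, lt_of_le_of_lt (len_comp_le X f.1 θ.unop.toOrderHom) f.2⟩
  map_id _ := rfl
  map_comp _ _ := rfl

/-- Inclusion of enriched nerves for `ε ≤ ε'`. -/
def Nincl {ε ε' : ℝ} (h : ε ≤ ε') : N X ε ⟶ N X ε' where
  app _ := TypeCat.ofHom fun f => ⟨f.1, f.2.trans h⟩
  naturality _ _ _ := rfl

/-- Inclusion of Vietoris–Rips simplicial sets for `ε ≤ ε'`. -/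
def Vincl {ε ε' : ℝ} (h : ε ≤ ε') : V X ε ⟶ V X ε' where
  app _ := TypeCat.ofHom fun f => ⟨f.1, fun i j => (f.2 i j).trans h⟩
  naturality _ _ _ := rfl

/-- Inclusion of the strict nerve into the nerve. -/
def N'incl (ε : ℝ) : N' X ε ⟶ N X ε where
  app _ := TypeCat.ofHom fun f => ⟨f.1, f.2.le⟩
  naturality _ _ _ := rfl

end Mag

/-- The unnormalised chain complex (alternating face map complex) of the free simplicial
abelian group on a simplicial set. -/
def Mag.CC : SSet ⥤ ChainComplex AddCommGrpCat ℕ :=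
  (SimplicialObject.whiskering _ _).obj AddCommGrpCat.free ⋙
    AlgebraicTopology.alternatingFaceMapComplex AddCommGrpCat

namespace Mag

variable (X : Type) [MetricSpace X]

/-- `CN X ε` is the unnormalised chain complex of the free simplicial abelian group on the
enriched nerve `N X ε`. -/
def CN (ε : ℝ) : ChainComplex AddCommGrpCat ℕ := CC.obj (N X ε)

/-- `CV X ε` is the unnormalised chain complex of the free simplicial abelian group on the
Vietoris–Rips simplicial set `V X ε`. -/
def CV (ε : ℝ) : ChainComplex AddCommGrpCat ℕ := CC.obj (V X ε)

def CNmap {ε ε' : ℝ} (h : ε ≤ ε') : CN X ε ⟶ CN X ε' := CC.map (Nincl X h)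

def CVmap {ε ε' : ℝ} (h : ε ≤ ε') : CV X ε ⟶ CV X ε' := CC.map (Vincl X h)

end Mag


namespace Mag

variable (X : Type) [MetricSpace X]

/-- The poset `(0,∞)` of positive real numbers, regarded as a category. -/
abbrev Pos : Type := {x : ℝ // 0 < x}

/-- The poset `[0,∞)` of non-negative real numbers, regarded as a category. -/
abbrev Nneg : Type := {x : ℝ // 0 ≤ x}

/-- The filtered enriched nerve, as a functor `(0,∞) ⥤ sSet`. -/
def Nfil : Pos ⥤ SSet where
  obj ε := N X ε.1
  map h := Nincl X (leOfHom h)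
  map_id _ := rfl
  map_comp _ _ := rfl

/-- The filtered Vietoris–Rips simplicial set, as a functor `(0,∞) ⥤ sSet`. -/
def Vfil : Pos ⥤ SSet where
  obj ε := V X ε.1
  map h := Vincl X (leOfHom h)
  map_id _ := rfl
  map_comp _ _ := rfl

/-- The `k`-th homology functor on chain complexes of abelian groups. -/
abbrev Hk (k : ℕ) : ChainComplex AddCommGrpCat ℕ ⥤ AddCommGrpCat :=
  HomologicalComplex.homologyFunctor AddCommGrpCat (ComplexShape.down ℕ) k

/-- The functor `ε ↦ H_k(CN(X)(ε))` on `(0,∞)`, with maps induced by inclusions. -/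
def NH (k : ℕ) : Pos ⥤ AddCommGrpCat := Nfil X ⋙ CC ⋙ Hk k

/-- The functor `ε ↦ H_k(CV(X)(ε))` on `(0,∞)`, with maps induced by inclusions. -/
def VH (k : ℕ) : Pos ⥤ AddCommGrpCat := Vfil X ⋙ CC ⋙ Hk k

end Mag

namespace Mag

variable (X : Type) [MetricSpace X]

/-- The index set `{(l,l') : 0 ≤ l ≤ l' ≤ ε}`. -/
def I2 (ε : ℝ) : Type := {p : ℝ × ℝ // 0 ≤ p.1 ∧ p.1 ≤ p.2 ∧ p.2 ≤ ε}

/-- The index set `{l : 0 ≤ l ≤ ε}`. -/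
def I1 (ε : ℝ) : Type := {l : ℝ // 0 ≤ l ∧ l ≤ ε}

/-- The source of the parallel pair: `⨁_{(l,l') : 0 ≤ l ≤ l' ≤ ε} CN(X)(l)`. -/
def src (ε : ℝ) : ChainComplex AddCommGrpCat ℕ := ∐ fun p : I2 ε => CN X p.1.1

/-- The target of the parallel pair: `⨁_{l : 0 ≤ l ≤ ε} CN(X)(l)`. -/
def tgt (ε : ℝ) : ChainComplex AddCommGrpCat ℕ := ∐ fun l : I1 ε => CN X l.1

/-- On the summand indexed by `(l,l')`, the chain map induced by the inclusion
`N(X)(l) ⊆ N(X)(l')` followed by the coprojection into the summand indexed by `l'`. -/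
def fmap (ε : ℝ) : src X ε ⟶ tgt X ε :=
  Sigma.desc fun p =>
    CNmap X p.2.2.1 ≫ Sigma.ι (fun l : I1 ε => CN X l.1) ⟨p.1.2, p.2.1.trans p.2.2.1, p.2.2.2⟩

/-- On the summand indexed by `(l,l')`, the coprojection into the summand indexed by `l`. -/
def gmap (ε : ℝ) : src X ε ⟶ tgt X ε :=
  Sigma.desc fun p => Sigma.ι (fun l : I1 ε => CN X l.1) ⟨p.1.1, p.2.1, p.2.2.1.trans p.2.2.2⟩

end Mag

namespace Mag

variable (X : Type) [MetricSpace X]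

/-- On the summand indexed by `l`, the chain map induced by the inclusion `N(X)(l) ⊆ N(X)(ε)`. -/
def f2 (ε : ℝ) : tgt X ε ⟶ CN X ε :=
  Limits.Sigma.desc fun l => CNmap X l.2.2

/-- The identity chain map on the summand `l = ε`, and the zero map on every summand with
`l < ε`. -/
def g2 (ε : ℝ) : tgt X ε ⟶ CN X ε :=
  Limits.Sigma.desc fun l => if h : l.1 = ε then eqToHom (by rw [h]) else 0

/-- `D(ε)`: the subcomplex of `CN(X)(ε)` spanned by the tuples of length strictly less
than `ε`, i.e. the unnormalised chain complex of the free simplicial abelian group on the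
strict enriched nerve. -/
def Dcx (ε : ℝ) : ChainComplex AddCommGrpCat ℕ := CC.obj (N' X ε)

/-- The inclusion `D(ε) → CN(X)(ε)`. -/
def Dincl (ε : ℝ) : Dcx X ε ⟶ CN X ε := CC.map (N'incl X ε)

/-- The quotient chain complex `CN(X)(ε)/D(ε)`. -/
def quotCx (ε : ℝ) : ChainComplex AddCommGrpCat ℕ := Limits.cokernel (Dincl X ε)

end Mag

/-!
A chain map `h` out of `CN(X)(ε)` coequalizes `f` and `g` exactly when it kills the image of
every `CN(X)(l)` with `l < ε`. Every tuple of length `< ε` already lies in `N(X)(l)` for `l` its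
length, so this is the same as killing `D(ε)`: the cokernel projection of `D(ε) → CN(X)(ε)` is a
coequalizer of `f` and `g`. In each degree that inclusion is the map of free abelian groups
induced by a map of bases, and such a cokernel is free on the basis elements outside the image,
here the tuples of length exactly `ε`.
-/

universe u

namespace FreeAbelianGroup

open Classical in
def quotientRangeMapEquiv {A B : Type u} (i : A → B) :
    FreeAbelianGroup B ⧸ (map i).range ≃+ FreeAbelianGroup ↥(Set.range i)ᶜ :=
  AddMonoidHom.toAddEquiv
    (QuotientAddGroup.lift _ (lift fun b => if h : b ∈ Set.range i then 0 else of ⟨b, h⟩) <| by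
      rintro _ ⟨x, rfl⟩
      rw [AddMonoidHom.mem_ker, ← AddMonoidHom.comp_apply]
      exact DFunLike.congr_fun (lift_ext _ 0 fun a => by simp) x)
    ((QuotientAddGroup.mk' _).comp (map Subtype.val))
    (by
      ext b
      simp only [AddMonoidHom.coe_comp, QuotientAddGroup.coe_mk', Function.comp_apply,
        QuotientAddGroup.lift_mk, lift_apply_of, AddMonoidHom.id_comp, QuotientAddGroup.mk'_apply]
      split_ifs with hb
      · obtain ⟨a, rfl⟩ := hb
        exact ((QuotientAddGroup.eq_zero_iff _).mpr
          (AddMonoidHom.mem_range.mpr ⟨of a, map_of_apply a⟩)).symm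
      · rw [map_of_apply])
    (by
      ext b
      simp only [AddMonoidHom.coe_comp, QuotientAddGroup.coe_mk', Function.comp_apply, map_of_apply,
        QuotientAddGroup.lift_mk, lift_apply_of, dif_neg b.2, AddMonoidHom.id_apply])

end FreeAbelianGroup

namespace AddCommGrpCat

lemma free_hom_ext {α : Type u} {G : AddCommGrpCat.{u}} {f g : free.obj α ⟶ G}
    (h : ∀ a, f (FreeAbelianGroup.of a) = g (FreeAbelianGroup.of a)) : f = g :=
  hom_ext (FreeAbelianGroup.lift_ext _ _ h)

def cokernelFreeMapIso {A B : Type u} (i : A ⟶ B) :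
    cokernel (free.map i) ≅ free.obj ↥(Set.range i)ᶜ :=
  cokernelIsoQuotient (free.map i) ≪≫ (FreeAbelianGroup.quotientRangeMapEquiv i).toAddCommGrpIso

end AddCommGrpCat

namespace Mag

variable (X : Type) [MetricSpace X]

def NinclStrict {l ε : ℝ} (h : l < ε) : N X l ⟶ N' X ε where
  app _ := TypeCat.ofHom fun f => ⟨f.1, f.2.trans_lt h⟩
  naturality _ _ _ := rfl

lemma CNmap_eq_comp_Dincl {l ε : ℝ} (h : l < ε) :
    CNmap X h.le = CC.map (NinclStrict X h) ≫ Dincl X ε :=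
  CC.map_comp (NinclStrict X h) (N'incl X ε)

lemma CNmap_self (ε : ℝ) : CNmap X (le_refl ε) = 𝟙 (CN X ε) :=
  CC.map_id _

-- `rw` and `simp` fail to abstract over terms typed by the non-reducible `I1 ε` and `Dcx X ε`,
-- hence the term-mode proofs below.
lemma ι_f2_assoc (ε : ℝ) (l : I1 ε) {Z : ChainComplex AddCommGrpCat ℕ} (h : CN X ε ⟶ Z) :
    Sigma.ι (fun l : I1 ε => CN X l.1) l ≫ f2 X ε ≫ h = CNmap X l.2.2 ≫ h :=
  (Category.assoc _ _ _).symm.trans (congrArg (· ≫ h) (Sigma.ι_desc _ _))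

lemma ι_g2_assoc_of_lt (ε : ℝ) (l : I1 ε) (hl : l.1 < ε) {Z : ChainComplex AddCommGrpCat ℕ}
    (h : CN X ε ⟶ Z) : Sigma.ι (fun l : I1 ε => CN X l.1) l ≫ g2 X ε ≫ h = 0 :=
  (Category.assoc _ _ _).symm.trans <|
    (congrArg (· ≫ h) ((Sigma.ι_desc _ _).trans (dif_neg hl.ne))).trans zero_comp

lemma ι_g2_assoc_self (ε : ℝ) (hε : 0 ≤ ε) {Z : ChainComplex AddCommGrpCat ℕ} (h : CN X ε ⟶ Z) :
    Sigma.ι (fun l : I1 ε => CN X l.1) ⟨ε, hε, le_rfl⟩ ≫ g2 X ε ≫ h = h :=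
  (Category.assoc _ _ _).symm.trans <|
    (congrArg (· ≫ h) ((Sigma.ι_desc _ _).trans (dif_pos rfl))).trans (Category.id_comp h)

lemma f2_comp_eq_g2_comp_iff (ε : ℝ) {Z : ChainComplex AddCommGrpCat ℕ} (h : CN X ε ⟶ Z) :
    f2 X ε ≫ h = g2 X ε ≫ h ↔ ∀ l, 0 ≤ l → ∀ hl : l < ε, CNmap X hl.le ≫ h = 0 := by
  constructor
  · intro hfg l hl0 hl
    let l' : I1 ε := ⟨l, hl0, hl.le⟩
    exact (ι_f2_assoc X ε l' h).symm.trans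
      ((Sigma.ι _ l' ≫= hfg).trans (ι_g2_assoc_of_lt X ε l' hl h))
  · refine fun hker => Sigma.hom_ext _ _ fun ⟨l, hl0, hlε⟩ => ?_
    refine (ι_f2_assoc X ε _ h).trans ?_
    obtain hlt | rfl := hlε.lt_or_eq
    · exact (hker l hl0 hlt).trans (ι_g2_assoc_of_lt X ε ⟨l, hl0, hlε⟩ hlt h).symm
    · exact ((congrArg (· ≫ h) (CNmap_self X l)).trans (Category.id_comp h)).trans
        (ι_g2_assoc_self X l hl0 h).symm

lemma Dincl_comp_eq_zero {ε : ℝ} {Z : ChainComplex AddCommGrpCat ℕ} (h : CN X ε ⟶ Z)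
    (hfg : f2 X ε ≫ h = g2 X ε ≫ h) : Dincl X ε ≫ h = 0 := by
  ext n : 1
  refine AddCommGrpCat.free_hom_ext fun s => ?_
  -- the generator `s` of `D(ε)` is the image of the generator `s` of `CN(X)(len s)`
  have hs := (f2_comp_eq_g2_comp_iff X ε h).mp hfg (len X s.1) (len_nonneg X s.1) s.2
  exact congrArg (fun φ => φ.f n (.of ⟨s.1, le_rfl⟩)) hs

lemma CNmap_comp_cokernel_π {l ε : ℝ} (hl : l < ε) :
    CNmap X hl.le ≫ cokernel.π (Dincl X ε) = 0 :=
  ((congrArg (· ≫ _) (CNmap_eq_comp_Dincl X hl)).trans (Category.assoc _ _ _)).trans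
    ((congrArg (CC.map (NinclStrict X hl) ≫ ·) (cokernel.condition _)).trans comp_zero)

def isColimitCokernelCofork (ε : ℝ) :
    IsColimit (Cofork.ofπ (cokernel.π (Dincl X ε))
      ((f2_comp_eq_g2_comp_iff X ε _).mpr fun _ _ hl => CNmap_comp_cokernel_π X hl)) :=
  Cofork.IsColimit.mk _
    (fun s => cokernel.desc _ s.π (Dincl_comp_eq_zero X s.π s.condition))
    (fun _ => cokernel.π_desc _ _ _)
    (fun _ _ hm => coequalizer.hom_ext (hm.trans (cokernel.π_desc _ _ _).symm))

lemma mem_range_N'incl_app_iff (ε : ℝ) (n : ℕ) (t : (N X ε).obj (.op (.mk n))) :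
    t ∈ Set.range ((N'incl X ε).app _) ↔ len X t.1 < ε :=
  ⟨fun ⟨s, hs⟩ => hs ▸ s.2, fun ht => ⟨⟨t.1, ht⟩, rfl⟩⟩

def complRangeN'inclEquiv (ε : ℝ) (n : ℕ) :
    ↥(Set.range ((N'incl X ε).app (.op (.mk n))))ᶜ ≃ { f : Fin (n + 1) → X // len X f = ε } where
  toFun t := ⟨t.1.1, t.1.2.antisymm <|
    not_lt.mp fun h => t.2 ((mem_range_N'incl_app_iff X ε n _).mpr h)⟩
  invFun f := ⟨⟨f.1, f.2.le⟩, fun h => ((mem_range_N'incl_app_iff X ε n _).mp h).ne f.2⟩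
  left_inv _ := rfl
  right_inv _ := rfl

def quotCxXIso (ε : ℝ) (n : ℕ) :
    (quotCx X ε).X n ≅ AddCommGrpCat.free.obj { f : Fin (n + 1) → X // len X f = ε } :=
  PreservesCokernel.iso (HomologicalComplex.eval _ _ n) (Dincl X ε) ≪≫
    AddCommGrpCat.cokernelFreeMapIso ((N'incl X ε).app _) ≪≫
    AddCommGrpCat.free.mapIso (complRangeN'inclEquiv X ε n).toIso

end Mag

theorem coequalizer_iso_quotient_general (X : Type) [MetricSpace X] (ε : ℝ) :
    Nonempty (Limits.coequalizer (Mag.f2 X ε) (Mag.g2 X ε) ≅ Mag.quotCx X ε) ∧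
    ∀ n : ℕ, Nonempty ((Mag.quotCx X ε).X n ≅
      AddCommGrpCat.free.obj { f : Fin (n + 1) → X // Mag.len X f = ε }) :=
  ⟨⟨(colimit.isColimit _).coconePointUniqueUpToIso (Mag.isColimitCokernelCofork X ε)⟩,
    fun n => ⟨Mag.quotCxXIso X ε n⟩⟩

theorem coequalizer_iso_quotient (X : Type) [MetricSpace X] (ε : ℝ) (hε : 0 ≤ ε) :
    Nonempty (Limits.coequalizer (Mag.f2 X ε) (Mag.g2 X ε) ≅ Mag.quotCx X ε) ∧
    ∀ n : ℕ, Nonempty ((Mag.quotCx X ε).X n ≅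
      AddCommGrpCat.free.obj { f : Fin (n + 1) → X // Mag.len X f = ε }) :=
  coequalizer_iso_quotient_general X ε
end
end

section
/- Let (X,d) be a metric space and k a non-negative integer. Then the limit as ε → 0 of the k-th homology groups H_k(CN(X)(ε)) of the enriched nerve, with maps induced by the inclusions N(X)(ε) ⊆ N(X)(ε') for ε ≤ ε', is isomorphic to the k-th Vietoris homology ℋ_k(X), that is, to the limit as ε → 0 of H_k(CV(X)(ε)) with maps induced by the inclusions V(X)(ε) ⊆ V(X)(ε'). -/
open CategoryTheory CategoryTheory.Limits

noncomputable section

/-!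
A tuple of length at most `ε` has all pairwise distances at most `ε`, so `N X ε ⊆ V X ε`.
Conversely an `(n+1)`-tuple with pairwise distances at most `ε / (k + 1)` has length at most
`n ε / (k + 1)`, which is at most `ε` as long as `n ≤ k + 1`; so the simplicial subset
`V X (ε / (k + 1)) ∩ N X ε` contains every simplex of `V X (ε / (k + 1))` of dimension `≤ k + 1`,
hence has the same `H_k`, and maps into `N X ε`. The resulting maps
`H_k N(ε) → H_k V(ε)` and `H_k V(ε / (k + 1)) → H_k N(ε)` interleave the two inverse systems,
and interleaved inverse systems have isomorphic limits.
-/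

namespace CategoryTheory.Limits

variable {J C : Type*} [Preorder J] [Category C] {F G : J ⥤ C} [HasLimit F] [HasLimit G]

def limitIsoOfInterleaving (a : F ⟶ G) {δ : J → J} (hδ : Monotone δ) (hδle : ∀ j, δ j ≤ j)
    (b : hδ.functor ⋙ G ⟶ F)
    (hab : ∀ j, a.app (δ j) ≫ b.app j = F.map (homOfLE (hδle j)))
    (hba : ∀ j, b.app j ≫ a.app j = G.map (homOfLE (hδle j))) : limit F ≅ limit G where
  hom := limMap a
  inv := limit.lift F ((Cone.postcompose b).obj ((limit.cone G).whisker hδ.functor))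
  hom_inv_id := by
    ext j
    rw [Category.assoc, limit.lift_π]
    exact (limMap_π_assoc a (δ j) _).trans (by rw [hab, limit.w, Category.id_comp])
  inv_hom_id := by
    ext j
    rw [Category.assoc, limMap_π, limit.lift_π_assoc]
    exact (Category.assoc _ _ _).trans
      (by rw [hba]; exact (limit.w G _).trans (Category.id_comp _).symm)

end CategoryTheory.Limits

namespace HomologicalComplex

variable {C ι : Type*} [Category C] [HasZeroMorphisms C] {c : ComplexShape ι}

lemma isIso_homologyMap_of_isIso_f {K L : HomologicalComplex C c} (φ : K ⟶ L) (i : ι)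
    [K.HasHomology i] [L.HasHomology i]
    [IsIso (φ.f (c.prev i))] [IsIso (φ.f i)] [IsIso (φ.f (c.next i))] :
    IsIso (homologyMap φ i) := by
  have : IsIso ((shortComplexFunctor C c i).map φ) := by
    have : IsIso ((shortComplexFunctor C c i).map φ).τ₁ := inferInstanceAs (IsIso (φ.f (c.prev i)))
    have : IsIso ((shortComplexFunctor C c i).map φ).τ₂ := inferInstanceAs (IsIso (φ.f i))
    have : IsIso ((shortComplexFunctor C c i).map φ).τ₃ := inferInstanceAs (IsIso (φ.f (c.next i)))
    exact ShortComplex.isIso_of_isIso _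
  exact ShortComplex.isIso_homologyMap_of_isIso _

end HomologicalComplex

namespace Mag

open Opposite Simplicial

lemma isIso_homologyMap_of_bijective {K L : SSet} (g : K ⟶ L) (k : ℕ)
    (hg : ∀ n ≤ k + 1, Function.Bijective (g.app (op ⦋n⦌))) :
    IsIso ((Hk k).map (CC.map g)) := by
  have hiso (n : ℕ) (hn : n ≤ k + 1) : IsIso ((CC.map g).f n) := by
    have : IsIso (g.app (op ⦋n⦌)) := (isIso_iff_bijective _).mpr (hg n hn)
    exact inferInstanceAs (IsIso (AddCommGrpCat.free.map (g.app (op ⦋n⦌))))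
  have hnext : (ComplexShape.down ℕ).next k ≤ k + 1 := by
    cases k <;> simp only [ChainComplex.next_nat_zero, ChainComplex.next_nat_succ] <;> omega
  have := hiso _ hnext
  have := hiso k k.le_succ
  have := hiso ((ComplexShape.down ℕ).prev k) (by simp)
  exact HomologicalComplex.isIso_homologyMap_of_isIso_f _ k

variable (X : Type) [MetricSpace X]

lemma dist_le_len {n : ℕ} (f : Fin (n + 1) → X) (i j : Fin (n + 1)) :
    dist (f i) (f j) ≤ len X f := by
  wlog hij : i ≤ j generalizing i j
  · rw [dist_comm]
    exact this j i (le_of_not_ge hij)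
  have hmono : Monotone ![i, j] := by
    simpa [Fin.monotone_iff_le_succ] using hij
  simpa [len] using len_comp_le X f ⟨![i, j], hmono⟩

lemma len_le_of_dist_le {n : ℕ} {ε : ℝ} (f : Fin (n + 1) → X)
    (hf : ∀ i j, dist (f i) (f j) ≤ ε) : len X f ≤ n * ε :=
  calc len X f ≤ ∑ _i : Fin n, ε := Finset.sum_le_sum fun _ _ => hf _ _
    _ = n * ε := by simp

def NtoV (ε : ℝ) : N X ε ⟶ V X ε where
  app _ := TypeCat.ofHom fun f => ⟨f.1, fun i j => (dist_le_len X f.1 i j).trans f.2⟩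

def VN (ε ε' : ℝ) : SSet where
  obj Δ := { f : Fin (Δ.unop.len + 1) → X // (∀ i j, dist (f i) (f j) ≤ ε) ∧ len X f ≤ ε' }
  map θ := TypeCat.ofHom fun f =>
    ⟨f.1 ∘ θ.unop.toOrderHom, fun _ _ => f.2.1 _ _, (len_comp_le X f.1 _).trans f.2.2⟩

def VN.toV (ε ε' : ℝ) : VN X ε ε' ⟶ V X ε where
  app _ := TypeCat.ofHom fun f => ⟨f.1, f.2.1⟩

def VN.toN (ε ε' : ℝ) : VN X ε ε' ⟶ N X ε' where
  app _ := TypeCat.ofHom fun f => ⟨f.1, f.2.2⟩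

def NtoVN {ε ε' : ℝ} (h : ε ≤ ε') : N X ε ⟶ VN X ε ε' where
  app _ := TypeCat.ofHom fun f => ⟨f.1, fun i j => (dist_le_len X f.1 i j).trans f.2, f.2.trans h⟩

lemma VN.bijective_toV_app {ε ε' : ℝ} {n : ℕ} (h : n * ε ≤ ε') :
    Function.Bijective ((VN.toV X ε ε').app (op ⦋n⦌)) := by
  refine ⟨fun f g hfg => ?_, fun f => ?_⟩
  · exact Subtype.ext (congrArg Subtype.val hfg :)
  · exact ⟨⟨f.1, f.2, (len_le_of_dist_le X f.1 f.2).trans h⟩, rfl⟩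

def shrink (k : ℕ) (ε : Pos) : Pos := ⟨ε.1 / (k + 1), by have := ε.2; positivity⟩

lemma shrink_monotone (k : ℕ) : Monotone (shrink k) := fun ε ε' h =>
  show ε.1 / (k + 1) ≤ ε'.1 / (k + 1) from div_le_div_of_nonneg_right h (by positivity)

lemma shrink_le (k : ℕ) (ε : Pos) : shrink k ε ≤ ε :=
  show ε.1 / (k + 1) ≤ ε.1 from div_le_self ε.2.le (by simp)

def NfilToVfil : Nfil X ⟶ Vfil X where
  app ε := NtoV X ε.1

def VNfil (k : ℕ) : Pos ⥤ SSet where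
  obj ε := VN X (shrink k ε).1 ε.1
  map h := { app := fun _ => TypeCat.ofHom fun f =>
    ⟨f.1, fun i j => (f.2.1 i j).trans (shrink_monotone k (leOfHom h)), f.2.2.trans (leOfHom h)⟩ }

def VNfil.toV (k : ℕ) : VNfil X k ⟶ (shrink_monotone k).functor ⋙ Vfil X where
  app ε := VN.toV X _ _

def VNfil.toN (k : ℕ) : VNfil X k ⟶ Nfil X where
  app ε := VN.toN X _ _

lemma isIso_homology_map_VNfil_toV_app (k : ℕ) (ε : Pos) :
    IsIso ((CC ⋙ Hk k).map ((VNfil.toV X k).app ε)) := by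
  refine isIso_homologyMap_of_bijective _ k fun n hn => VN.bijective_toV_app X ?_
  show (n : ℝ) * (ε.1 / (k + 1)) ≤ ε.1
  calc (n : ℝ) * (ε.1 / (k + 1)) ≤ (k + 1) * (ε.1 / (k + 1)) :=
        mul_le_mul_of_nonneg_right (by exact_mod_cast hn) (shrink k ε).2.le
    _ = ε.1 := mul_div_cancel₀ _ (by positivity)

def VNfilHomologyIso (k : ℕ) : VNfil X k ⋙ CC ⋙ Hk k ≅ (shrink_monotone k).functor ⋙ VH X k :=
  NatIso.ofComponents
    (fun ε => @asIso _ _ _ _ _ (isIso_homology_map_VNfil_toV_app X k ε))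
    fun f => (Functor.whiskerRight (VNfil.toV X k) (CC ⋙ Hk k)).naturality f

def NHtoVH (k : ℕ) : NH X k ⟶ VH X k := Functor.whiskerRight (NfilToVfil X) (CC ⋙ Hk k)

def VHtoNH (k : ℕ) : (shrink_monotone k).functor ⋙ VH X k ⟶ NH X k :=
  (VNfilHomologyIso X k).inv ≫ Functor.whiskerRight (VNfil.toN X k) (CC ⋙ Hk k)

lemma NHtoVH_app_comp_VHtoNH_app (k : ℕ) (ε : Pos) :
    (NHtoVH X k).app (shrink k ε) ≫ (VHtoNH X k).app ε =
      (NH X k).map (homOfLE (shrink_le k ε)) := by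
  have ha : (NHtoVH X k).app (shrink k ε) =
      (CC ⋙ Hk k).map (NtoVN X (shrink_le k ε)) ≫ (VNfilHomologyIso X k).hom.app ε :=
    (CC ⋙ Hk k).map_comp (NtoVN X (shrink_le k ε)) ((VNfil.toV X k).app ε)
  have hb : (VHtoNH X k).app ε =
      (VNfilHomologyIso X k).inv.app ε ≫ (CC ⋙ Hk k).map ((VNfil.toN X k).app ε) := rfl
  rw [ha, hb]
  erw [Category.assoc, Iso.hom_inv_id_app_assoc]
  exact ((CC ⋙ Hk k).map_comp _ _).symm

lemma VHtoNH_app_comp_NHtoVH_app (k : ℕ) (ε : Pos) :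
    (VHtoNH X k).app ε ≫ (NHtoVH X k).app ε = (VH X k).map (homOfLE (shrink_le k ε)) := by
  have hb : (VHtoNH X k).app ε ≫ (NHtoVH X k).app ε =
      (VNfilHomologyIso X k).inv.app ε ≫ (CC ⋙ Hk k).map ((VNfil.toN X k).app ε ≫ NtoV X ε.1) :=
    (Category.assoc _ _ _).trans (congrArg _ ((CC ⋙ Hk k).map_comp _ _).symm)
  have hV : (CC ⋙ Hk k).map ((VNfil.toN X k).app ε ≫ NtoV X ε.1) =
      (VNfilHomologyIso X k).hom.app ε ≫ (VH X k).map (homOfLE (shrink_le k ε)) :=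
    (CC ⋙ Hk k).map_comp ((VNfil.toV X k).app ε) ((Vfil X).map (homOfLE (shrink_le k ε)))
  rw [hb, hV]
  exact Iso.inv_hom_id_app_assoc _ _ _

end Mag

/-- **Statement 3.** The limit as `ε → 0` of `H_k(CN(X)(ε))` is isomorphic to the `k`-th
Vietoris homology, i.e. the limit as `ε → 0` of `H_k(CV(X)(ε))`. -/
theorem limit_NH_iso_limit_VH (X : Type) [MetricSpace X] (k : ℕ) :
    Nonempty (Limits.limit (Mag.NH X k) ≅ Limits.limit (Mag.VH X k)) :=
  ⟨limitIsoOfInterleaving (Mag.NHtoVH X k) (Mag.shrink_monotone k) (Mag.shrink_le k)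
    (Mag.VHtoNH X k) (Mag.NHtoVH_app_comp_VHtoNH_app X k) (Mag.VHtoNH_app_comp_NHtoVH_app X k)⟩
end
end

section
/- Let (P, ≤) be a poset, regarded as a category with exactly one morphism p → p' whenever p ≤ p', and let C be a category with zero morphisms. Then the full subcategory of the functor category Fun(P, C) consisting of those functors that send every morphism p → p' with p < p' to the zero morphism is isomorphic, as a category, to the functor category Fun(Discrete(P), C), where Discrete(P) is the discrete category on the underlying set of P. -/
/-!
In a poset every morphism `p ⟶ p'` is either an identity or strict, so a functor `P ⥤ C` killing
the strict morphisms is determined by its restriction to `Discrete P`, and conversely every graded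
object extends to such a functor by sending the strict morphisms to zero. Hence restriction is
faithful and injective on objects and has extension by zero as a strict section, which forces the
two functors to be mutually inverse.
-/

open CategoryTheory Limits

universe u v w

namespace CategoryTheory

theorem Functor.comp_eq_id_of_comp_eq_id {C : Type*} [Category* C] {D : Type*} [Category* D]
    {F : C ⥤ D} {G : D ⥤ C} [F.Faithful] (hF : Function.Injective F.obj)
    (hGF : G ⋙ F = 𝟭 D) : F ⋙ G = 𝟭 C := by
  have hobj (X : C) : G.obj (F.obj X) = X := hF (Functor.congr_obj hGF (F.obj X))
  refine Functor.ext hobj fun X Y f => F.map_injective ?_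
  simpa [eqToHom_map] using Functor.congr_hom hGF (F.map f)

variable {P : Type u} [PartialOrder P] {C : Type v} [Category.{w} C] [HasZeroMorphisms C]

variable (P C) in
def strictMapsZero : ObjectProperty (P ⥤ C) :=
  fun F => ∀ (p p' : P) (h : p ⟶ p'), p < p' → F.map h = 0

open Classical in
@[simps obj]
noncomputable def extendByZero (D : Discrete P ⥤ C) : P ⥤ C where
  obj p := D.obj ⟨p⟩
  map {p p'} _ := if h : p = p' then eqToHom (by rw [h]) else 0
  map_id p := by simp
  map_comp {p q r} f g := by
    by_cases hpr : p = r
    · obtain rfl : p = q := le_antisymm (leOfHom f) (hpr ▸ leOfHom g)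
      subst hpr
      simp
    · by_cases hpq : p = q
      · subst hpq
        simp [hpr]
      · simp [hpq, hpr]

lemma extendByZero_map_of_lt (D : Discrete P ⥤ C) {p p' : P} (f : p ⟶ p') (h : p < p') :
    (extendByZero D).map f = 0 :=
  dif_neg h.ne

lemma extendByZero_mem (D : Discrete P ⥤ C) : strictMapsZero P C (extendByZero D) :=
  fun _ _ f h => extendByZero_map_of_lt D f h

lemma eq_extendByZero_of_mem {F : P ⥤ C} (hF : strictMapsZero P C F) :
    F = extendByZero (Discrete.functor id ⋙ F) := by
  refine Functor.hext (fun _ => rfl) fun p p' f => ?_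
  obtain rfl | h := (leOfHom f).eq_or_lt
  · obtain rfl : f = 𝟙 p := Subsingleton.elim _ _
    rw [Functor.map_id, Functor.map_id]
    rfl
  · rw [hF p p' f h, extendByZero_map_of_lt _ f h]
    rfl

lemma discrete_functor_id_comp_extendByZero (D : Discrete P ⥤ C) :
    Discrete.functor id ⋙ extendByZero D = D := by
  refine Functor.hext (fun _ => rfl) fun ⟨p⟩ ⟨q⟩ f => ?_
  obtain rfl : p = q := Discrete.eq_of_hom f
  obtain rfl : f = 𝟙 _ := Subsingleton.elim _ _
  rw [Functor.map_id, Functor.map_id]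
  rfl

variable (P C)

noncomputable def extendByZeroFunctor :
    (Discrete P ⥤ C) ⥤ (strictMapsZero P C).FullSubcategory where
  obj D := ⟨extendByZero D, extendByZero_mem D⟩
  map {D E} η := ObjectProperty.homMk
    { app p := η.app ⟨p⟩
      naturality p p' f := by
        obtain rfl | h := (leOfHom f).eq_or_lt
        · obtain rfl : f = 𝟙 p := Subsingleton.elim _ _
          rw [Functor.map_id, Functor.map_id]
          exact (Category.id_comp _).trans (Category.comp_id _).symm
        · rw [extendByZero_map_of_lt _ f h, extendByZero_map_of_lt _ f h]
          exact zero_comp.trans comp_zero.symm }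

def restrictToDiscrete : (strictMapsZero P C).FullSubcategory ⥤ (Discrete P ⥤ C) :=
  ObjectProperty.ι _ ⋙ (Functor.whiskeringLeft _ _ C).obj (Discrete.functor id)

instance : (restrictToDiscrete P C).Faithful where
  map_injective h :=
    ObjectProperty.hom_ext _ (NatTrans.ext (funext fun p => NatTrans.congr_app h ⟨p⟩))

lemma restrictToDiscrete_obj_injective : Function.Injective (restrictToDiscrete P C).obj :=
  fun F G h => ObjectProperty.FullSubcategory.ext <|
    (eq_extendByZero_of_mem F.property).trans <|
      (congrArg extendByZero h).trans (eq_extendByZero_of_mem G.property).symm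

lemma extendByZeroFunctor_comp_restrictToDiscrete :
    extendByZeroFunctor P C ⋙ restrictToDiscrete P C = 𝟭 _ := by
  -- The `show` fixes the type of the object equality, so that `eqToHom_app` can match below.
  refine Functor.ext (fun D => show (extendByZeroFunctor P C ⋙ restrictToDiscrete P C).obj D = D
    from discrete_functor_id_comp_extendByZero D) fun D E η => ?_
  ext ⟨p⟩
  simp only [Functor.id_map, NatTrans.comp_app, eqToHom_app]
  exact ((Category.id_comp _).trans (Category.comp_id _)).symm

lemma restrictToDiscrete_comp_extendByZeroFunctor :
    restrictToDiscrete P C ⋙ extendByZeroFunctor P C = 𝟭 _ :=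
  Functor.comp_eq_id_of_comp_eq_id (restrictToDiscrete_obj_injective P C)
    (extendByZeroFunctor_comp_restrictToDiscrete P C)

end CategoryTheory

/-- **Statement 15.** For a poset `P` and a category `C` with zero morphisms, the full
subcategory of `Fun(P, C)` on the functors sending every strict morphism to the zero
morphism is isomorphic, as a category, to `Fun(Discrete P, C)`. -/
theorem graded_iso_persistent_with_zero_maps (P : Type u) [PartialOrder P]
    (C : Type v) [Category.{w} C] [Limits.HasZeroMorphisms C] :
    Nonempty (Cat.of (ObjectProperty.FullSubcategory (fun F : P ⥤ C =>
        ∀ (p p' : P) (h : p ⟶ p'), p < p' → F.map h = 0)) ≅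
      Cat.of (Discrete P ⥤ C)) :=
  ⟨⟨(restrictToDiscrete P C).toCatHom, (extendByZeroFunctor P C).toCatHom,
    Cat.ext (restrictToDiscrete_comp_extendByZeroFunctor P C),
    Cat.ext (extendByZeroFunctor_comp_restrictToDiscrete P C)⟩⟩
end
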